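/- arXiv:1003.4935 — 2 statements merged into one kernel-verified Lean document; each statement's English description precedes it below -/
import Mathlib

section
/- For an ideal I ⊆ ℂ[z₁,…,z_m] with 𝔪₀^N ⊆ I, the space 𝕍₀(I) of polynomials q with q(D)p|₀ = 0 for all p ∈ I equals { q* : q ∈ (𝔪₀^N)^⊥ ⊖ I_N }, where I_N = I ∩ span{z^α : |α| < N}, orthogonal complements being taken in the Fock inner product; in particular 𝕍₀(I) is independent of the choice of N with 𝔪₀^N ⊆ I. -/
open MvPolynomial Complex Finset

/-- Iterated partial-derivative operator `∂^β` on polynomials. -/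
noncomputable def Dpow {m : ℕ} (β : Fin m →₀ ℕ) :
    Module.End ℂ (MvPolynomial (Fin m) ℂ) :=
  (((List.finRange m).map fun j =>
    ((MvPolynomial.pderiv j).toLinearMap : Module.End ℂ (MvPolynomial (Fin m) ℂ)) ^ (β j))).prod

/-- The constant-coefficient differential operator `q(D)` applied to `p`. -/
noncomputable def diffOp {m : ℕ} (q p : MvPolynomial (Fin m) ℂ) : MvPolynomial (Fin m) ℂ :=
  ∑ β ∈ q.support, q.coeff β • Dpow β p

/-- `q* `: conjugate the coefficients of `q`. -/
noncomputable def starPoly {m : ℕ} (q : MvPolynomial (Fin m) ℂ) : MvPolynomial (Fin m) ℂ :=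
  MvPolynomial.map (starRingEnd ℂ) q

/-- The Fock pairing at `w`: `⟨p,q⟩_w = (q*(D)p)(w)`. -/
noncomputable def fock {m : ℕ} (w : Fin m → ℂ) (p q : MvPolynomial (Fin m) ℂ) : ℂ :=
  MvPolynomial.eval w (diffOp (starPoly q) p)

/-- Multi-index factorial `α! = α₁!⋯α_m!`. -/
def mfac {m : ℕ} (α : Fin m →₀ ℕ) : ℕ := ∏ i : Fin m, (α i).factorial

/-- Total degree `|α|` of a multi-index. -/
def mdeg {m : ℕ} (α : Fin m →₀ ℕ) : ℕ := ∑ i : Fin m, α i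

/-- Multi-index binomial coefficient. -/
def mbinom {m : ℕ} (α k : Fin m →₀ ℕ) : ℕ := ∏ i : Fin m, (α i).choose (k i)

/-- The characteristic space `𝕍_w(I)`. -/
noncomputable def Vchar {m : ℕ} (w : Fin m → ℂ) (I : Set (MvPolynomial (Fin m) ℂ)) :
    Set (MvPolynomial (Fin m) ℂ) :=
  {q | ∀ p ∈ I, MvPolynomial.eval w (diffOp q p) = 0}

/-- The auxiliary space `𝕍̃_w(I)`. -/
noncomputable def Vtilde {m : ℕ} (w : Fin m → ℂ) (I : Set (MvPolynomial (Fin m) ℂ)) :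
    Set (MvPolynomial (Fin m) ℂ) :=
  {q | ∀ j : Fin m, MvPolynomial.pderiv j q ∈ Vchar w I}

/-! At the origin `q(D)p` evaluates to `∑_β q_β β! p_β`, so the condition `q ∈ 𝕍₀(I)` only
sees the coefficients of `p ∈ I` on the support of `q`. As `𝔪₀^N ⊆ I` contains every monomial
`z^α` with `|α| ≥ N`, testing against these forces `q` to have degree `< N`; conversely, for such
`q` each `p ∈ I` may be replaced by its truncation below degree `N`, which still lies in `I`
(it differs from `p` by an element of `𝔪₀^N`) and hence in `I_N`. Conjugating the coefficients
of `q` turns `q(D)p|₀` into the Fock pairing `⟨p, q*⟩₀`. -/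

namespace MvPolynomial

variable {σ R : Type*}

theorem coeff_pderiv_pow [CommSemiring R] (j : σ) (n : ℕ) (p : MvPolynomial σ R) (γ : σ →₀ ℕ) :
    coeff γ ((((pderiv j).toLinearMap : Module.End R (MvPolynomial σ R)) ^ n) p) =
      ((γ j + n).descFactorial n : R) * coeff (γ + Finsupp.single j n) p := by
  induction n generalizing p γ with
  | zero => simp
  | succ n ih =>
    rw [pow_succ, Module.End.mul_apply, ih, Derivation.coeFn_coe, coeff_pderiv, add_assoc,
      ← Finsupp.single_add, Finsupp.add_apply, Finsupp.single_eq_same,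
      ← add_assoc (γ j) n 1, Nat.succ_descFactorial_succ]
    push_cast
    ring

theorem coeff_list_prod_pderiv_pow [CommSemiring R] (β : σ →₀ ℕ) {l : List σ} (hl : l.Nodup)
    (p : MvPolynomial σ R) (γ : σ →₀ ℕ) :
    coeff γ ((l.map fun j =>
        ((pderiv j).toLinearMap : Module.End R (MvPolynomial σ R)) ^ β j).prod p) =
      (l.map fun j => ((γ j + β j).descFactorial (β j) : R)).prod *
        coeff (γ + (l.map fun j => Finsupp.single j (β j)).sum) p := by
  induction l generalizing γ with
  | nil => simp
  | cons j t ih =>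
    obtain ⟨hjt, ht⟩ := List.nodup_cons.mp hl
    have hγ : (t.map fun i => (((γ + Finsupp.single j (β j)) i + β i).descFactorial (β i) : R)) =
        t.map fun i => ((γ i + β i).descFactorial (β i) : R) :=
      List.map_congr_left fun i hi => by
        rw [Finsupp.add_apply, Finsupp.single_eq_of_ne (by rintro rfl; exact hjt hi), add_zero]
    rw [List.map_cons, List.prod_cons, Module.End.mul_apply, coeff_pderiv_pow, ih ht, hγ,
      List.map_cons, List.prod_cons, List.map_cons, List.sum_cons, add_assoc]
    ring

theorem sub_truncTotal_mem_pow_idealOfVars [CommRing R] [Finite σ] (N : ℕ)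
    (p : MvPolynomial σ R) :
    p - MvPowerSeries.truncTotal N (p : MvPowerSeries σ R) ∈ idealOfVars σ R ^ N := by
  refine (mem_pow_idealOfVars_iff' N _).mpr fun x hx => ?_
  rw [coeff_sub, MvPowerSeries.coeff_truncTotal _ hx, coeff_coe, sub_self]

end MvPolynomial

section FockPairing

variable {m : ℕ}

theorem coeff_Dpow (β γ : Fin m →₀ ℕ) (p : MvPolynomial (Fin m) ℂ) :
    (Dpow β p).coeff γ =
      (∏ i, ((γ i + β i).descFactorial (β i) : ℂ)) * p.coeff (γ + β) := by
  rw [Dpow, coeff_list_prod_pderiv_pow β (List.nodup_finRange m), ← Fin.prod_univ_def,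
    ← Fin.sum_univ_def, Finsupp.univ_sum_single]

theorem eval_zero_Dpow (β : Fin m →₀ ℕ) (p : MvPolynomial (Fin m) ℂ) :
    eval 0 (Dpow β p) = mfac β * p.coeff β := by
  simp [MvPolynomial.eval_zero, constantCoeff_eq, coeff_Dpow, mfac, Nat.descFactorial_self]

theorem eval_zero_diffOp (q p : MvPolynomial (Fin m) ℂ) :
    eval 0 (diffOp q p) = ∑ β ∈ q.support, q.coeff β * mfac β * p.coeff β := by
  simp only [diffOp, map_sum, smul_eval, eval_zero_Dpow, mul_assoc]

theorem eval_zero_diffOp_congr {q p p' : MvPolynomial (Fin m) ℂ}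
    (h : ∀ β ∈ q.support, p.coeff β = p'.coeff β) :
    eval 0 (diffOp q p) = eval 0 (diffOp q p') := by
  simp only [eval_zero_diffOp]
  exact Finset.sum_congr rfl fun β hβ => by rw [h β hβ]

theorem eval_zero_diffOp_monomial (q : MvPolynomial (Fin m) ℂ) (α : Fin m →₀ ℕ) :
    eval 0 (diffOp q (monomial α 1)) = q.coeff α * mfac α := by
  rw [eval_zero_diffOp]
  simp +contextual [coeff_monomial]

theorem starPoly_starPoly (q : MvPolynomial (Fin m) ℂ) : starPoly (starPoly q) = q := by
  ext β
  simp [starPoly, coeff_map]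

theorem support_starPoly (q : MvPolynomial (Fin m) ℂ) : (starPoly q).support = q.support :=
  support_map_of_injective q (RingHom.injective _)

theorem fock_starPoly (w : Fin m → ℂ) (p q : MvPolynomial (Fin m) ℂ) :
    fock w p (starPoly q) = eval w (diffOp q p) := by
  rw [fock, starPoly_starPoly]

end FockPairing

namespace MvPowerSeries

theorem degree_lt_of_mem_support_truncTotal {σ R : Type*} [Finite σ] [CommSemiring R] {N : ℕ}
    {p : MvPowerSeries σ R} {x : σ →₀ ℕ} (hx : x ∈ (truncTotal N p).support) : x.degree < N := by
  by_contra! hN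
  exact MvPolynomial.mem_support_iff.mp hx (coeff_truncTotal_eq_zero p hN)

end MvPowerSeries

section CharacteristicSpace

variable {m N : ℕ} {I : Ideal (MvPolynomial (Fin m) ℂ)}

theorem mdeg_eq_degree (α : Fin m →₀ ℕ) : mdeg α = α.degree :=
  (Finsupp.degree_eq_sum α).symm

theorem mfac_ne_zero (α : Fin m →₀ ℕ) : mfac α ≠ 0 :=
  Finset.prod_ne_zero_iff.mpr fun i _ => Nat.factorial_ne_zero (α i)

theorem mdeg_lt_of_mem_Vchar_zero (h : idealOfVars (Fin m) ℂ ^ N ≤ I)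
    {q : MvPolynomial (Fin m) ℂ} (hq : q ∈ Vchar 0 (I : Set (MvPolynomial (Fin m) ℂ)))
    {α : Fin m →₀ ℕ} (hα : α ∈ q.support) : mdeg α < N := by
  by_contra! hN
  have hαI : monomial α (1 : ℂ) ∈ I :=
    h ((monomial_mem_pow_idealOfVars_iff N α one_ne_zero).mpr (mdeg_eq_degree α ▸ hN))
  have hvanish := hq _ hαI
  rw [eval_zero_diffOp_monomial] at hvanish
  exact mul_ne_zero (mem_support_iff.mp hα) (Nat.cast_ne_zero.mpr (mfac_ne_zero α)) hvanish

theorem mem_Vchar_zero_iff (h : idealOfVars (Fin m) ℂ ^ N ≤ I) (q : MvPolynomial (Fin m) ℂ) :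
    q ∈ Vchar 0 (I : Set (MvPolynomial (Fin m) ℂ)) ↔
      (∀ α ∈ q.support, mdeg α < N) ∧
        ∀ p ∈ I, (∀ α ∈ p.support, mdeg α < N) → eval 0 (diffOp q p) = 0 := by
  refine ⟨fun hq => ⟨fun α hα => mdeg_lt_of_mem_Vchar_zero h hq hα, fun p hp _ => hq p hp⟩, ?_⟩
  rintro ⟨hdeg, horth⟩ p hp
  set pLow := MvPowerSeries.truncTotal N (p : MvPowerSeries (Fin m) ℂ)
  have hLowI : pLow ∈ I := by
    simpa using I.sub_mem hp (h (sub_truncTotal_mem_pow_idealOfVars N p))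
  have hLowDeg : ∀ α ∈ pLow.support, mdeg α < N := fun α hα =>
    mdeg_eq_degree α ▸ MvPowerSeries.degree_lt_of_mem_support_truncTotal hα
  rw [eval_zero_diffOp_congr (p' := pLow) fun β hβ => ?_]
  · exact horth pLow hLowI hLowDeg
  · rw [MvPowerSeries.coeff_truncTotal _ (mdeg_eq_degree β ▸ hdeg β hβ), coeff_coe]

end CharacteristicSpace

/-- for `𝔪₀^N ⊆ I`, the characteristic space `𝕍₀(I)` equals
`{ q* : q ∈ (𝔪₀^N)^⊥ ⊖ I_N }`, where `(𝔪₀^N)^⊥` is identified with the span of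
monomials of degree `< N` and the orthocomplement is with respect to the Fock
inner product; in particular `𝕍₀(I)` does not depend on the choice of `N`. -/
theorem Vchar_eq_star_orthocomplement {m N : ℕ}
    (I : Ideal (MvPolynomial (Fin m) ℂ))
    (h : (Ideal.span (Set.range (MvPolynomial.X : Fin m → MvPolynomial (Fin m) ℂ))) ^ N ≤ I) :
    Vchar (0 : Fin m → ℂ) (I : Set (MvPolynomial (Fin m) ℂ))
      = {q : MvPolynomial (Fin m) ℂ | ∃ q' : MvPolynomial (Fin m) ℂ,
          q = starPoly q' ∧ (∀ α ∈ q'.support, mdeg α < N) ∧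
          ∀ p ∈ I, (∀ α ∈ p.support, mdeg α < N) → fock 0 p q' = 0} := by
  ext q
  rw [mem_Vchar_zero_iff h]
  constructor
  · rintro ⟨hdeg, horth⟩
    refine ⟨starPoly q, (starPoly_starPoly q).symm, by rwa [support_starPoly], fun p hp hp' => ?_⟩
    rw [fock_starPoly]
    exact horth p hp hp'
  · rintro ⟨q, rfl, hdeg, horth⟩
    exact ⟨by rwa [support_starPoly], horth⟩
end

section
/- Grammian representation of the matrices A(r): fix a nonzero polynomial p₁ in ℂ[z₁,…,z_m], integers n ≥ 1 and 0 ≤ r ≤ n. For multi-indices α, i with |α| = |i| = n, define A_{αi}(r) = Σ_{ν: |ν|=r, ν≤α, i≥α−ν} binom(α,ν) (i!/(i−α+ν)!) ⟨∂^ν p₁, ∂^{i−α+ν} p₁⟩₀, and 0 when the index set is empty. Then A(r) = Σ_{|μ| = n−r} (1/μ!) X_μ^r (X_μ^r)^t, where X_μ^r(β) = μ! binom(β, β−μ) ∂^{β−μ} p₁ for β ≥ μ and 0 otherwise, and consequently the matrix A(r) is non-negative definite. -/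
open MvPolynomial Complex Finset

open scoped ComplexOrder

/-- The finite set of multi-indices of total degree `n`. -/
noncomputable def degSet (m n : ℕ) : Finset (Fin m →₀ ℕ) :=
  (Finset.Iic (Finsupp.equivFunOnFinite.symm fun _ : Fin m => n)).filter fun μ => mdeg μ = n

/-- The tuple `X_μ^r`: `X_μ^r(β) = μ! binom(β, β−μ) ∂^{β−μ} p₁` if `β ≥ μ`, else `0`. -/
noncomputable def Xtuple {m : ℕ} (p₁ : MvPolynomial (Fin m) ℂ) (μ β : Fin m →₀ ℕ) :
    MvPolynomial (Fin m) ℂ :=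
  if μ ≤ β then ((mfac μ * mbinom β (β - μ) : ℕ) : ℂ) • Dpow (β - μ) p₁ else 0

/-- The matrix entry `A_{αi}(r)`. -/
noncomputable def Aent {m : ℕ} (p₁ : MvPolynomial (Fin m) ℂ) (α i : Fin m →₀ ℕ) (r : ℕ) : ℂ :=
  ∑ ν ∈ (degSet m r).filter (fun ν => ν ≤ α ∧ α - ν ≤ i),
    (mbinom α ν : ℂ) * ((mfac i : ℂ) / (mfac (i - (α - ν)) : ℂ)) *
      fock 0 (Dpow ν p₁) (Dpow (i - (α - ν)) p₁)

/-!
At `w = 0` the Fock pairing is `⟨p, q⟩₀ = ∑_β β! p_β conj(q_β)`, because the constant term of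
`∂^β z^γ` is `β!` for `γ = β` and `0` otherwise; hence it is a positive semidefinite
sesquilinear form. Substituting `μ = α - ν` turns the defining sum of `A_{αi}(r)` into
`∑_μ (1/μ!) ⟨X_μ^r(α), X_μ^r(i)⟩₀`, since `i!/(i-μ)! = μ! binom(i, i-μ)`. A nonnegative
combination of Gram matrices of a positive semidefinite form is positive semidefinite.
-/

lemma pderiv_pow_monomial {σ R : Type*} [CommSemiring R] (j : σ) (k : ℕ) (γ : σ →₀ ℕ) (c : R) :
    ((pderiv j).toLinearMap ^ k : Module.End R (MvPolynomial σ R)) (monomial γ c)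
      = monomial (γ - Finsupp.single j k) (c * (γ j).descFactorial k) := by
  induction k with
  | zero => simp
  | succ k ih =>
    rw [pow_succ', Module.End.mul_apply, ih, Derivation.coeFn_coe, pderiv_monomial, tsub_tsub,
      ← Finsupp.single_add, Finsupp.tsub_apply, Finsupp.single_eq_same, Nat.descFactorial_succ,
      Nat.cast_mul, mul_right_comm, mul_assoc]

lemma list_prod_pderiv_pow_monomial {σ R : Type*} [CommSemiring R] [DecidableEq σ]
    (β : σ →₀ ℕ) {L : List σ} (hL : L.Nodup) (γ : σ →₀ ℕ) (c : R) :
    (L.map fun j => ((pderiv j).toLinearMap ^ β j : Module.End R (MvPolynomial σ R))).prod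
        (monomial γ c)
      = monomial (γ - ∑ j ∈ L.toFinset, Finsupp.single j (β j))
          (c * ∏ j ∈ L.toFinset, ((γ j).descFactorial (β j) : R)) := by
  induction L with
  | nil => simp
  | cons a L ih =>
    obtain ⟨haL, hL⟩ := List.nodup_cons.mp hL
    have haL' : a ∉ L.toFinset := by simpa using haL
    have hsum_a : (∑ j ∈ L.toFinset, Finsupp.single j (β j)) a = 0 := by
      rw [Finsupp.finsetSum_apply]
      exact Finset.sum_eq_zero fun j hj => Finsupp.single_eq_of_ne (by rintro rfl; exact haL' hj)
    rw [List.map_cons, List.prod_cons, Module.End.mul_apply, ih hL, pderiv_pow_monomial,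
      List.toFinset_cons, Finset.sum_insert haL', Finset.prod_insert haL', tsub_tsub, add_comm,
      Finsupp.tsub_apply, hsum_a, Nat.sub_zero]
    congr 1
    ring

lemma Dpow_monomial {m : ℕ} (β γ : Fin m →₀ ℕ) (c : ℂ) :
    Dpow β (monomial γ c) = monomial (γ - β) (c * ∏ j, ((γ j).descFactorial (β j) : ℂ)) := by
  rw [Dpow, list_prod_pderiv_pow_monomial β (List.nodup_finRange m), List.toFinset_finRange,
    Finsupp.univ_sum_single]

lemma constantCoeff_Dpow {m : ℕ} (β : Fin m →₀ ℕ) (p : MvPolynomial (Fin m) ℂ) :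
    constantCoeff (Dpow β p) = mfac β * coeff β p := by
  classical
  induction p using MvPolynomial.induction_on' with
  | add p q hp hq => rw [map_add, map_add, hp, hq, coeff_add, mul_add]
  | monomial γ c =>
    rw [Dpow_monomial, constantCoeff_monomial, coeff_monomial]
    by_cases hγβ : γ = β
    · subst hγβ
      simp [mfac, Nat.descFactorial_self, mul_comm]
    · rw [if_neg hγβ, mul_zero, ite_eq_right_iff, tsub_eq_zero_iff_le]
      intro hle
      obtain ⟨j, hj⟩ : ∃ j, γ j < β j := by
        by_contra! h
        exact hγβ (le_antisymm hle h)
      have hj0 : ((γ j).descFactorial (β j) : ℂ) = 0 := by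
        rw [Nat.descFactorial_eq_zero_iff_lt.mpr hj, Nat.cast_zero]
      rw [Finset.prod_eq_zero (Finset.mem_univ j) hj0, mul_zero]

lemma fock_zero_eq_sum {m : ℕ} (p q : MvPolynomial (Fin m) ℂ) {s : Finset (Fin m →₀ ℕ)}
    (hs : q.support ⊆ s) :
    fock 0 p q = ∑ β ∈ s, (mfac β : ℂ) * coeff β p * starRingEnd ℂ (coeff β q) := by
  have hsupp : (starPoly q).support = q.support :=
    support_map_of_injective q (starRingEnd ℂ).injective
  rw [fock, diffOp, map_sum, hsupp, Finset.sum_subset hs fun β _ hβ => by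
    rw [smul_eval, starPoly, coeff_map, notMem_support_iff.mp hβ, map_zero, zero_mul]]
  refine Finset.sum_congr rfl fun β _ => ?_
  rw [smul_eval, starPoly, coeff_map, eval_zero, constantCoeff_Dpow]
  ring

noncomputable def fockZeroForm (m : ℕ) :
    MvPolynomial (Fin m) ℂ →ₗ[ℂ] MvPolynomial (Fin m) ℂ →ₗ⋆[ℂ] ℂ :=
  LinearMap.mk₂'ₛₗ (RingHom.id ℂ) (starRingEnd ℂ) (fock 0)
    (fun p₁ p₂ q => by
      simp only [fock_zero_eq_sum _ q subset_rfl, coeff_add, mul_add, add_mul,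
        Finset.sum_add_distrib])
    (fun c p q => by
      simp only [fock_zero_eq_sum _ q subset_rfl, coeff_smul, smul_eq_mul, RingHom.id_apply,
        Finset.mul_sum]
      exact Finset.sum_congr rfl fun _ _ => by ring)
    (fun p q₁ q₂ => by
      rw [fock_zero_eq_sum p (q₁ + q₂) support_add,
        fock_zero_eq_sum p q₁ (Finset.subset_union_left (s₂ := q₂.support)),
        fock_zero_eq_sum p q₂ (Finset.subset_union_right (s₁ := q₁.support))]
      simp only [coeff_add, map_add, mul_add, Finset.sum_add_distrib])
    (fun c p q => by
      rw [fock_zero_eq_sum p (c • q) support_smul, fock_zero_eq_sum p q subset_rfl, smul_eq_mul,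
        Finset.mul_sum]
      exact Finset.sum_congr rfl fun _ _ => by rw [coeff_smul, smul_eq_mul, map_mul]; ring)

lemma fockZeroForm_apply {m : ℕ} (p q : MvPolynomial (Fin m) ℂ) :
    fockZeroForm m p q = fock 0 p q := rfl

lemma fock_zero_self_nonneg {m : ℕ} (q : MvPolynomial (Fin m) ℂ) : 0 ≤ fock 0 q q := by
  rw [fock_zero_eq_sum q q subset_rfl]
  refine Finset.sum_nonneg fun β _ => ?_
  rw [mul_assoc, Complex.mul_conj]
  exact mul_nonneg (Nat.cast_nonneg _) (Complex.zero_le_real.mpr (Complex.normSq_nonneg _))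

lemma sum_sum_conj_mul_fock_zero_mul_nonneg {ι : Type*} {m : ℕ} (s : Finset ι) (c : ι → ℂ)
    (X : ι → MvPolynomial (Fin m) ℂ) :
    0 ≤ ∑ α ∈ s, ∑ i ∈ s, starRingEnd ℂ (c α) * fock 0 (X α) (X i) * c i := by
  convert fock_zero_self_nonneg (∑ α ∈ s, starRingEnd ℂ (c α) • X α) using 1
  simp only [← fockZeroForm_apply, map_sum, map_smul, map_smulₛₗ, LinearMap.sum_apply,
    LinearMap.smul_apply, smul_eq_mul, Complex.conj_conj, Finset.mul_sum]
  rw [Finset.sum_comm]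
  exact Finset.sum_congr rfl fun _ _ => Finset.sum_congr rfl fun _ _ => by ring

lemma mem_degSet {m n : ℕ} {μ : Fin m →₀ ℕ} : μ ∈ degSet m n ↔ mdeg μ = n := by
  simp only [degSet, Finset.mem_filter, Finset.mem_Iic, and_iff_right_iff_imp]
  rintro rfl j
  exact Finset.single_le_sum (fun k _ => Nat.zero_le (μ k)) (Finset.mem_univ j)

lemma mdeg_tsub_add_mdeg {m : ℕ} {α ν : Fin m →₀ ℕ} (h : ν ≤ α) :
    mdeg (α - ν) + mdeg ν = mdeg α := by
  simp only [mdeg, ← Finset.sum_add_distrib, Finsupp.tsub_apply, Nat.sub_add_cancel (h _)]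

lemma tsub_mem_degSet {m n k : ℕ} {α ν : Fin m →₀ ℕ} (h : ν ≤ α) (hα : α ∈ degSet m n)
    (hν : ν ∈ degSet m k) : α - ν ∈ degSet m (n - k) := by
  rw [mem_degSet] at *
  have := mdeg_tsub_add_mdeg h
  omega

lemma mfac_pos {m : ℕ} (μ : Fin m →₀ ℕ) : 0 < mfac μ :=
  Finset.prod_pos fun _ _ => Nat.factorial_pos _

lemma mfac_mul_mbinom_mul_mfac {m : ℕ} {μ β : Fin m →₀ ℕ} (h : μ ≤ β) :
    mfac μ * mbinom β (β - μ) * mfac (β - μ) = mfac β := by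
  simp only [mfac, mbinom, ← Finset.prod_mul_distrib]
  refine Finset.prod_congr rfl fun j _ => ?_
  rw [Finsupp.tsub_apply, Nat.choose_symm (h j), Nat.mul_comm (μ j).factorial,
    Nat.choose_mul_factorial_mul_factorial (h j)]

lemma Xtuple_of_not_le {m : ℕ} (p₁ : MvPolynomial (Fin m) ℂ) {μ β : Fin m →₀ ℕ}
    (h : ¬μ ≤ β) : Xtuple p₁ μ β = 0 :=
  if_neg h

lemma Aent_eq_sum_fock_Xtuple {m n r : ℕ} (p₁ : MvPolynomial (Fin m) ℂ) (hr : r ≤ n)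
    {α : Fin m →₀ ℕ} (hα : α ∈ degSet m n) (i : Fin m →₀ ℕ) :
    Aent p₁ α i r = ∑ μ ∈ degSet m (n - r),
      (1 / (mfac μ : ℂ)) * fock 0 (Xtuple p₁ μ α) (Xtuple p₁ μ i) := by
  classical
  rw [← Finset.sum_subset (Finset.filter_subset (fun μ => μ ≤ α ∧ μ ≤ i) _) fun μ _ hμ => by
    rw [← fockZeroForm_apply]
    by_cases hμα : μ ≤ α
    · have hμi : ¬μ ≤ i := fun hμi => hμ (Finset.mem_filter.mpr ⟨‹_›, hμα, hμi⟩)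
      rw [Xtuple_of_not_le p₁ hμi, map_zero, mul_zero]
    · rw [Xtuple_of_not_le p₁ hμα, map_zero, LinearMap.zero_apply, mul_zero]]
  rw [Aent]
  refine Finset.sum_nbij' (α - ·) (α - ·) ?_ ?_ ?_ ?_ ?_
  · intro ν hν
    simp only [Finset.mem_filter] at hν ⊢
    exact ⟨tsub_mem_degSet hν.2.1 hα hν.1, tsub_le_self, hν.2.2⟩
  · intro μ hμ
    simp only [Finset.mem_filter] at hμ ⊢
    refine ⟨?_, tsub_le_self, by rw [tsub_tsub_cancel_of_le hμ.2.1]; exact hμ.2.2⟩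
    simpa [Nat.sub_sub_self hr] using tsub_mem_degSet hμ.2.1 hα hμ.1
  · intro ν hν
    exact tsub_tsub_cancel_of_le (Finset.mem_filter.mp hν).2.1
  · intro μ hμ
    exact tsub_tsub_cancel_of_le (Finset.mem_filter.mp hμ).2.1
  · intro ν hν
    obtain ⟨-, hνα, hμi⟩ := Finset.mem_filter.mp hν
    have hi := mfac_mul_mbinom_mul_mfac hμi
    rw [Xtuple, Xtuple, if_pos tsub_le_self, if_pos hμi, tsub_tsub_cancel_of_le hνα]
    simp only [← fockZeroForm_apply, map_smul, map_smulₛₗ, LinearMap.smul_apply, smul_eq_mul,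
      map_natCast]
    rw [← hi]
    push_cast
    field_simp [Nat.cast_ne_zero.mpr (mfac_pos (i - (α - ν))).ne',
      Nat.cast_ne_zero.mpr (mfac_pos (α - ν)).ne']

theorem Aent_grammian_nonneg_general {m : ℕ} (p₁ : MvPolynomial (Fin m) ℂ)
    (n r : ℕ) (hr : r ≤ n) :
    (∀ α ∈ degSet m n, ∀ i ∈ degSet m n,
        Aent p₁ α i r = ∑ μ ∈ degSet m (n - r),
          (1 / (mfac μ : ℂ)) * fock 0 (Xtuple p₁ μ α) (Xtuple p₁ μ i)) ∧
    (∀ c : (Fin m →₀ ℕ) → ℂ,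
        0 ≤ ∑ α ∈ degSet m n, ∑ i ∈ degSet m n,
          (starRingEnd ℂ) (c α) * Aent p₁ α i r * c i) := by
  have hgram := fun α (hα : α ∈ degSet m n) i (_ : i ∈ degSet m n) =>
    Aent_eq_sum_fock_Xtuple p₁ hr hα i
  refine ⟨hgram, fun c => ?_⟩
  calc 0 ≤ ∑ μ ∈ degSet m (n - r), (1 / (mfac μ : ℂ)) *
        ∑ α ∈ degSet m n, ∑ i ∈ degSet m n,
          starRingEnd ℂ (c α) * fock 0 (Xtuple p₁ μ α) (Xtuple p₁ μ i) * c i :=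
      Finset.sum_nonneg fun μ _ =>
        mul_nonneg (one_div_nonneg.mpr (Nat.cast_nonneg _))
          (sum_sum_conj_mul_fock_zero_mul_nonneg _ _ _)
    _ = _ := by
      simp only [Finset.mul_sum]
      rw [Finset.sum_comm]
      refine Finset.sum_congr rfl fun α hα => ?_
      rw [Finset.sum_comm]
      refine Finset.sum_congr rfl fun i hi => ?_
      rw [hgram α hα i hi, Finset.mul_sum, Finset.sum_mul]
      exact Finset.sum_congr rfl fun _ _ => by ring

/-- Grammian representation
`A(r) = Σ_{|μ|=n−r} (1/μ!) X_μ^r (X_μ^r)^t`, and consequently `A(r)` is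
non-negative definite. -/
theorem Aent_grammian_nonneg {m : ℕ} (p₁ : MvPolynomial (Fin m) ℂ) (hp : p₁ ≠ 0)
    (n r : ℕ) (hn : 1 ≤ n) (hr : r ≤ n) :
    (∀ α ∈ degSet m n, ∀ i ∈ degSet m n,
        Aent p₁ α i r = ∑ μ ∈ degSet m (n - r),
          (1 / (mfac μ : ℂ)) * fock 0 (Xtuple p₁ μ α) (Xtuple p₁ μ i)) ∧
    (∀ c : (Fin m →₀ ℕ) → ℂ,
        0 ≤ ∑ α ∈ degSet m n, ∑ i ∈ degSet m n,
          (starRingEnd ℂ) (c α) * Aent p₁ α i r * c i) :=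
  Aent_grammian_nonneg_general p₁ n r hr
end
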